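/- Random embedding captures the effective subspace: let f: ℝᴰ → ℝ have effective dimensionality d_e, i.e., f(x) = h(Qx) where the first d_e rows of the orthogonal matrix Q span the effective subspace and h depends only on its first d_e coordinates. Then for any x⁎ ∈ ℝᴰ, with probability 1 over a D×d Gaussian random matrix A with d ≥ d_e, there exists y ∈ ℝᵈ such that f(Ay) = f(x⁎). -/

import Mathlib

/-!
Write `P` for the `d_e × D` block of the first `d_e` rows of `Q`. Since `h` only reads the
first `d_e` coordinates, it suffices to find `y` with `P A y = P x⁎`, which is possible as
soon as the `d_e × d` matrix `P A` has full row rank, i.e. `det ((P A) (P A)ᵀ) ≠ 0`. This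
determinant is a polynomial in the entries of `A`, and it is not the zero polynomial: at
`A = Pᵀ E`, where `E` selects `d_e` of the `d` columns, it equals `det (P Pᵀ) ^ 2 = 1`. The
zero set of a nonzero polynomial is null for any product of atomless measures on `ℝ`
(induction on the number of variables, a nonzero one-variable polynomial having finitely many
roots), so `P A` has full row rank almost surely.
-/

open MeasureTheory ProbabilityTheory Matrix

namespace MvPolynomial

theorem ae_eval_ne_zero_of_fin {n : ℕ} (μ : Fin n → Measure ℝ) [∀ i, SigmaFinite (μ i)]
    [∀ i, NullSingletonClass (μ i)] {p : MvPolynomial (Fin n) ℝ} (hp : p ≠ 0) :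
    ∀ᵐ x ∂Measure.pi μ, eval x p ≠ 0 := by
  induction n with
  | zero =>
    obtain ⟨c, rfl⟩ := C_surjective (Fin 0) p
    exact .of_forall fun x => by simpa using hp
  | succ n ih =>
    set q := finSuccEquiv ℝ n p
    have hq : q ≠ 0 := by simpa [q] using hp
    have hlead : ∀ᵐ s ∂Measure.pi (fun j => μ (Fin.succ j)), eval s q.leadingCoeff ≠ 0 :=
      ih _ (Polynomial.leadingCoeff_ne_zero.mpr hq)
    have hsection : ∀ᵐ s ∂Measure.pi (fun j => μ (Fin.succ j)), ∀ᵐ a ∂μ 0,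
        eval (Fin.cons a s) p ≠ 0 := by
      filter_upwards [hlead] with s hs
      have hqs : q.map (eval s) ≠ 0 := Polynomial.leadingCoeff_ne_zero.mp <| by
        rwa [Polynomial.leadingCoeff_map_of_leadingCoeff_ne_zero _ hs]
      filter_upwards [(Polynomial.finite_setOfPred_isRoot hqs).countable.ae_notMem (μ 0)]
        with a ha
      rwa [eval_eq_eval_mv_eval']
    set e := MeasurableEquiv.piFinSuccAbove (fun _ : Fin (n + 1) => ℝ) 0
    have hmeas : MeasurableSet {z : ℝ × (Fin n → ℝ) | eval (e.symm (z.1, z.2)) p ≠ 0} :=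
      (p.continuous_eval.measurable.comp e.symm.measurable) (measurableSet_singleton 0).compl
    rw [← (measurePreserving_piFinSuccAbove μ 0).symm.map_eq,
      e.symm.measurableEmbedding.ae_map_iff]
    refine (Measure.ae_prod_iff_ae_ae hmeas).2 ((Measure.ae_ae_comm hmeas).2 ?_)
    simpa [e, Fin.consEquiv] using hsection

theorem ae_eval_ne_zero {ι : Type*} [Fintype ι] (μ : ι → Measure ℝ)
    [∀ i, SigmaFinite (μ i)] [∀ i, NullSingletonClass (μ i)] {p : MvPolynomial ι ℝ} (hp : p ≠ 0) :
    ∀ᵐ x ∂Measure.pi μ, eval x p ≠ 0 := by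
  set f := (Fintype.equivFin ι).symm
  have hp' : rename f.symm p ≠ 0 := by
    simpa using (rename_injective _ f.symm.injective).ne hp
  rw [← (measurePreserving_piCongrLeft μ f).map_eq,
    (MeasurableEquiv.piCongrLeft _ f).measurableEmbedding.ae_map_iff]
  filter_upwards [ae_eval_ne_zero_of_fin _ hp'] with x hx
  rw [eval_rename] at hx
  convert hx using 3
  funext i
  simp [MeasurableEquiv.coe_piCongrLeft, Equiv.piCongrLeft_apply]

end MvPolynomial

theorem measurePreserving_uncurry {ι κ X : Type*} [Fintype ι] [Fintype κ] [MeasurableSpace X]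
    (μ : ι → κ → Measure X) [∀ i j, SigmaFinite (μ i j)] :
    MeasurePreserving Function.uncurry (Measure.pi fun i => Measure.pi (μ i))
      (Measure.pi fun p : ι × κ => μ p.1 p.2) := by
  have hmeas : Measurable (Function.uncurry : (ι → κ → X) → ι × κ → X) :=
    (MeasurableEquiv.curry ι κ X).symm.measurable
  refine ⟨hmeas, (Measure.pi_eq fun s hs => ?_).symm⟩
  rw [Measure.map_apply hmeas (.univ_pi hs)]
  have hpre : Function.uncurry ⁻¹' Set.univ.pi s =
      Set.univ.pi fun i => Set.univ.pi fun j => s (i, j) := by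
    ext A
    simp only [Set.mem_preimage, Set.mem_univ_pi]
    exact ⟨fun hA i j => hA (i, j), fun hA p => hA p.1 p.2⟩
  simp_rw [hpre, Measure.pi_pi, Fintype.prod_prod_type]

namespace Matrix

variable {R m ι κ : Type*} [CommRing R] [Fintype m] [DecidableEq m] [Fintype ι]

theorem mulVec_surjective_of_isUnit_det_mul_transpose {M : Matrix m ι R}
    (h : IsUnit (M * Mᵀ).det) : Function.Surjective M.mulVec := fun t =>
  ⟨Mᵀ *ᵥ ((M * Mᵀ)⁻¹ *ᵥ t), by
    rw [mulVec_mulVec, mulVec_mulVec, mul_nonsing_inv _ h, one_mulVec]⟩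

variable [Fintype κ]

theorem exists_mvPolynomial_eval_eq_det_mul_mul_transpose (P : Matrix m ι R) :
    ∃ p : MvPolynomial (ι × κ) R, ∀ A : ι → κ → R,
      MvPolynomial.eval (Function.uncurry A) p = ((P * of A) * (P * of A)ᵀ).det := by
  set B : Matrix m κ (MvPolynomial (ι × κ) R) :=
    P.map (algebraMap R (MvPolynomial (ι × κ) R)) * mvPolynomialX ι κ R with hB
  refine ⟨(B * Bᵀ).det, fun A => ?_⟩
  have hBA : B.map (MvPolynomial.eval (Function.uncurry A)) = P * of A := by
    rw [hB, Matrix.map_mul, Matrix.map_map, ← mvPolynomialX_map_eval₂ (RingHom.id R) (of A)]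
    congr 1
    ext i j
    simp
  rw [RingHom.map_det, RingHom.mapMatrix_apply, Matrix.map_mul, transpose_map, hBA]

theorem exists_isUnit_det_mul_mul_transpose {P : Matrix m ι R} (hP : IsUnit (P * Pᵀ).det)
    (e : m ↪ κ) : ∃ A : ι → κ → R, IsUnit ((P * of A) * (P * of A)ᵀ).det := by
  classical
  set E : Matrix m κ R := (1 : Matrix κ κ R).submatrix e id
  have hE : E * Eᵀ = 1 := by
    ext i j
    simp [E, mul_apply, one_apply]
  refine ⟨of.symm (Pᵀ * E), ?_⟩
  rw [Equiv.apply_symm_apply, ← Matrix.mul_assoc, transpose_mul, Matrix.mul_assoc,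
    ← Matrix.mul_assoc E, hE, Matrix.one_mul, det_mul, det_transpose]
  exact hP.mul hP

theorem ae_mul_mulVec_surjective (μ : ι → κ → Measure ℝ) [∀ i j, SigmaFinite (μ i j)]
    [∀ i j, NullSingletonClass (μ i j)] {P : Matrix m ι ℝ} (hP : IsUnit (P * Pᵀ).det)
    (e : m ↪ κ) :
    ∀ᵐ A ∂(Measure.pi fun i => Measure.pi (μ i)), Function.Surjective (P * of A).mulVec := by
  obtain ⟨p, hp⟩ := exists_mvPolynomial_eval_eq_det_mul_mul_transpose (κ := κ) P
  obtain ⟨A₀, hA₀⟩ := exists_isUnit_det_mul_mul_transpose hP e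
  have hp0 : p ≠ 0 := fun h => hA₀.ne_zero (by rw [← hp, h, map_zero])
  filter_upwards [(measurePreserving_uncurry μ).quasiMeasurePreserving.ae
    (MvPolynomial.ae_eval_ne_zero _ hp0)] with A hA
  rw [hp] at hA
  exact mulVec_surjective_of_isUnit_det_mul_transpose hA.isUnit

end Matrix

/-- Random embedding captures the effective subspace (REMBO, Wang et al. 2013):
if `f : ℝᴰ → ℝ` has effective dimensionality `d_e`, i.e. `f x = h (Q x)` for an
orthogonal matrix `Q` and a function `h` depending only on its first `d_e`
coordinates, then for any `x⁎`, almost surely over a `D × d` standard Gaussian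
matrix `A` with `d ≥ d_e`, there exists `y ∈ ℝᵈ` with `f (A y) = f x⁎`. -/
theorem rembo_embedding_captures_optimum
    (D d de : ℕ) (hde : de ≤ d) (hdD : d ≤ D)
    (f h : (Fin D → ℝ) → ℝ)
    (Q : Matrix (Fin D) (Fin D) ℝ) (hQ : Q.transpose * Q = 1)
    (hh : ∀ x y : Fin D → ℝ, (∀ i : Fin D, (i : ℕ) < de → x i = y i) → h x = h y)
    (hf : ∀ x, f x = h (Q.mulVec x))
    (xstar : Fin D → ℝ) :
    ∀ᵐ A ∂(Measure.pi fun _ : Fin D => Measure.pi fun _ : Fin d => gaussianReal 0 1),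
      ∃ y : Fin d → ℝ, f ((Matrix.of A).mulVec y) = f xstar := by
  have := nullSingletonClass_gaussianReal (μ := 0) (one_ne_zero (α := NNReal))
  set r := Fin.castLE (hde.trans hdD)
  set P := Q.submatrix r id
  have hP : IsUnit (P * Pᵀ).det := by
    have hPP : P * Pᵀ = (Q * Qᵀ).submatrix r r := rfl
    rw [hPP, mul_eq_one_comm.mp hQ, submatrix_one r (Fin.castLE_injective _), det_one]
    exact isUnit_one
  filter_upwards [ae_mul_mulVec_surjective (fun _ _ => gaussianReal 0 1) hP (Fin.castLEEmb hde)]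
    with A hA
  obtain ⟨y, hy⟩ := hA (P *ᵥ xstar)
  refine ⟨y, ?_⟩
  rw [hf, hf]
  refine hh _ _ fun i hi => ?_
  rw [← mulVec_mulVec] at hy
  exact congrFun hy ⟨i, hi⟩
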